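/- arXiv:2209.07330 — 4 statements merged into one kernel-verified Lean document; each statement's English description precedes it below -/
import Mathlib

section
/- For every real x ≥ 0, the standard normal cumulative distribution function satisfies (1/(√(2π)(1+x)))·exp(−x²/2) ≤ Φ(−x) ≤ (1/(√π·(1+x)))·exp(−x²/2). -/
/-!
For `y ≤ 0` the function `G y = exp (-y²/2) / (1 - y)` vanishes at `-∞` and has derivative
`exp (-y²/2) · r y` with `r y = (y² - y + 1) / (1 - y)²`. On `(-∞, 0]` one has `r ≤ 1`, and
`1 ≤ √2 · r` everywhere, so integrating over `(-∞, -x]` gives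
`G (-x) ≤ ∫_{-∞}^{-x} exp (-t²/2) dt ≤ √2 · G (-x)`, which is the claim after dividing by `√(2π)`.
-/

open MeasureTheory Filter Topology Real Set

noncomputable def gaussTailBound (y : ℝ) : ℝ := exp (-y ^ 2 / 2) / (1 - y)

noncomputable def gaussTailRatio (y : ℝ) : ℝ := (y ^ 2 - y + 1) / (1 - y) ^ 2

lemma hasDerivAt_gaussTailBound {y : ℝ} (hy : y ≠ 1) :
    HasDerivAt gaussTailBound (exp (-y ^ 2 / 2) * gaussTailRatio y) y := by
  have hne : 1 - y ≠ 0 := sub_ne_zero.mpr hy.symm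
  have hsq : HasDerivAt (fun y : ℝ => -y ^ 2 / 2) (-y) y := by
    refine ((hasDerivAt_pow 2 y).neg.div_const 2).congr_deriv ?_
    ring
  refine (hsq.exp.div ((hasDerivAt_id' y).const_sub 1) hne).congr_deriv ?_
  rw [gaussTailRatio]
  field_simp
  ring

lemma gaussTailRatio_nonneg (y : ℝ) : 0 ≤ gaussTailRatio y := by
  have : 0 ≤ y ^ 2 - y + 1 := by nlinarith [sq_nonneg (y - 1 / 2)]
  rw [gaussTailRatio]
  positivity

lemma gaussTailRatio_le_one {y : ℝ} (hy : y ≤ 0) : gaussTailRatio y ≤ 1 := by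
  rw [gaussTailRatio, div_le_one (by nlinarith)]
  nlinarith

-- The quadratic `(√2 - 1) y² + (2 - √2) y + (√2 - 1)` has discriminant `4√2 - 6 < 0`.
lemma one_le_sqrt_two_mul_gaussTailRatio {y : ℝ} (hy : y ≠ 1) : 1 ≤ √2 * gaussTailRatio y := by
  have hs : √2 ^ 2 = 2 := sq_sqrt zero_le_two
  have h1 : 1 < √2 := by nlinarith [sqrt_nonneg 2]
  have hd : 0 < (1 - y) ^ 2 := by positivity [sub_ne_zero.mpr hy.symm]
  rw [gaussTailRatio, mul_div_assoc', le_div_iff₀ hd, one_mul]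
  nlinarith [sq_nonneg (2 * y + √2)]

lemma tendsto_gaussTailBound_atBot : Tendsto gaussTailBound atBot (𝓝 0) := by
  have hexp : Tendsto (fun y : ℝ => exp (-y ^ 2 / 2)) atBot (𝓝 0) := by
    simp only [tendsto_exp_comp_nhds_zero, neg_div, tendsto_neg_atBot_iff]
    exact ((tendsto_pow_atTop two_ne_zero).comp tendsto_neg_atBot_atTop).atTop_div_const
      two_pos |>.congr fun y => by simp
  have hden : Tendsto (fun y : ℝ => 1 - y) atBot atTop :=
    tendsto_atTop_add_const_left _ 1 tendsto_neg_atBot_atTop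
  exact hexp.div_atTop hden

lemma integrableOn_exp_neg_sq_div_two (a : ℝ) :
    IntegrableOn (fun t : ℝ => exp (-t ^ 2 / 2)) (Iic a) := by
  refine ((integrable_exp_neg_mul_sq (b := 1 / 2) (by norm_num)).congr
    (Eventually.of_forall fun t => ?_)).integrableOn
  ring_nf

lemma integrableOn_exp_mul_gaussTailRatio {a : ℝ} (ha : a ≤ 0) :
    IntegrableOn (fun y => exp (-y ^ 2 / 2) * gaussTailRatio y) (Iic a) := by
  refine (integrableOn_exp_neg_sq_div_two a).mono' ?_ ?_
  · exact Measurable.aestronglyMeasurable (by unfold gaussTailRatio; fun_prop)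
  · refine (ae_restrict_iff' measurableSet_Iic).mpr (Eventually.of_forall fun y hy => ?_)
    have hy0 : y ≤ 0 := hy.out.trans ha
    rw [norm_of_nonneg (by have := gaussTailRatio_nonneg y; positivity)]
    exact mul_le_of_le_one_right (exp_pos _).le (gaussTailRatio_le_one hy0)

lemma integral_Iic_exp_mul_gaussTailRatio {a : ℝ} (ha : a ≤ 0) :
    ∫ y in Iic a, exp (-y ^ 2 / 2) * gaussTailRatio y = gaussTailBound a := by
  simpa using integral_Iic_of_hasDerivAt_of_tendsto'
    (fun y hy => hasDerivAt_gaussTailBound (by linarith [mem_Iic.mp hy]))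
    (integrableOn_exp_mul_gaussTailRatio ha) tendsto_gaussTailBound_atBot

lemma gaussTailBound_le_integral_Iic {a : ℝ} (ha : a ≤ 0) :
    gaussTailBound a ≤ ∫ t in Iic a, exp (-t ^ 2 / 2) := by
  rw [← integral_Iic_exp_mul_gaussTailRatio ha]
  refine setIntegral_mono_on (integrableOn_exp_mul_gaussTailRatio ha)
    (integrableOn_exp_neg_sq_div_two a) measurableSet_Iic fun y hy => ?_
  exact mul_le_of_le_one_right (exp_pos _).le (gaussTailRatio_le_one (hy.out.trans ha))

lemma integral_Iic_le_sqrt_two_mul_gaussTailBound {a : ℝ} (ha : a ≤ 0) :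
    ∫ t in Iic a, exp (-t ^ 2 / 2) ≤ √2 * gaussTailBound a := by
  rw [← integral_Iic_exp_mul_gaussTailRatio ha, ← integral_const_mul]
  refine setIntegral_mono_on (integrableOn_exp_neg_sq_div_two a)
    ((integrableOn_exp_mul_gaussTailRatio ha).const_mul _) measurableSet_Iic fun y hy => ?_
  have hy1 : y ≠ 1 := by linarith [hy.out]
  calc exp (-y ^ 2 / 2) ≤ exp (-y ^ 2 / 2) * (√2 * gaussTailRatio y) :=
        le_mul_of_one_le_right (exp_pos _).le (one_le_sqrt_two_mul_gaussTailRatio hy1)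
    _ = √2 * (exp (-y ^ 2 / 2) * gaussTailRatio y) := by ring

theorem stmt0 (x : ℝ) (hx : 0 ≤ x) :
    1 / (Real.sqrt (2 * Real.pi) * (1 + x)) * Real.exp (-x ^ 2 / 2) ≤
        (Real.sqrt (2 * Real.pi))⁻¹ * (∫ t in Set.Iic (-x), Real.exp (-t ^ 2 / 2)) ∧
      (Real.sqrt (2 * Real.pi))⁻¹ * (∫ t in Set.Iic (-x), Real.exp (-t ^ 2 / 2)) ≤
        1 / (Real.sqrt Real.pi * (1 + x)) * Real.exp (-x ^ 2 / 2) := by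
  have hax : -x ≤ 0 := neg_nonpos.mpr hx
  have hG : gaussTailBound (-x) = exp (-x ^ 2 / 2) / (1 + x) := by
    rw [gaussTailBound, neg_sq, sub_neg_eq_add]
  have hsqrt : √(2 * π) = √2 * √π := sqrt_mul zero_le_two π
  have hpos : 0 < √(2 * π) := by positivity
  constructor
  · calc 1 / (√(2 * π) * (1 + x)) * exp (-x ^ 2 / 2) = (√(2 * π))⁻¹ * gaussTailBound (-x) := by
          rw [hG]; field_simp
      _ ≤ _ := mul_le_mul_of_nonneg_left (gaussTailBound_le_integral_Iic hax) (by positivity)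
  · calc (√(2 * π))⁻¹ * ∫ t in Iic (-x), exp (-t ^ 2 / 2)
        ≤ (√(2 * π))⁻¹ * (√2 * gaussTailBound (-x)) :=
          mul_le_mul_of_nonneg_left (integral_Iic_le_sqrt_two_mul_gaussTailBound hax)
            (by positivity)
      _ = 1 / (√π * (1 + x)) * exp (-x ^ 2 / 2) := by
          have : 0 < √2 := by positivity
          rw [hG, hsqrt]; field_simp
end

section
/- Let K ≥ 2 and let σ : Fin K → ℝ be positive reals, with a distinguished index a*. Define w*(a*) = σ(a*)/(σ(a*) + √(∑_{b≠a*} σ(b)²)) and w*(a) = (1 − w*(a*))·σ(a)²/∑_{b≠a*} σ(b)² for a ≠ a*. Then w* is a probability vector (all entries positive, summing to 1), and w* maximizes, over all probability vectors w with positive entries, the quantity min_{a≠a*} 1/(σ(a*)²/w(a*) + σ(a)²/w(a)); moreover the maximal value equals 1/(σ(a*) + √(∑_{b≠a*} σ(b)²))². -/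
/-!
The weights `optimalWeights σ a*` give every suboptimal arm `a` the same cost
`σ(a*)²/w(a*) + σ(a)²/w(a) = (σ(a*) + √S)²`, where `S = ∑_{b ≠ a*} σ(b)²`. Conversely, for any
weights `w`, the ratio `S / ∑_{b ≠ a*} w(b) = S / (1 - w(a*))` is dominated by one of the ratios
`σ(a)²/w(a)`, and Sedrakyan's inequality gives `σ(a*)²/w(a*) + S/(1 - w(a*)) ≥ (σ(a*) + √S)²`,
so that arm has cost at least `(σ(a*) + √S)²`.
-/

open Finset

theorem Finset.exists_sum_div_sum_le_div {ι R : Type*} [Field R] [LinearOrder R]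
    [IsStrictOrderedRing R] {s : Finset ι} (hs : s.Nonempty) (f : ι → R) {g : ι → R}
    (hg : ∀ i ∈ s, 0 < g i) : ∃ i ∈ s, (∑ j ∈ s, f j) / (∑ j ∈ s, g j) ≤ f i / g i := by
  have hsum : ∑ j ∈ s, (∑ j ∈ s, f j) / (∑ j ∈ s, g j) * g j = ∑ j ∈ s, f j := by
    rw [← mul_sum, div_mul_cancel₀ _ (sum_pos hg hs).ne']
  obtain ⟨i, hi, hle⟩ := exists_le_of_sum_le hs hsum.le
  exact ⟨i, hi, (le_div_iff₀ (hg i hi)).2 hle⟩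

theorem add_sq_div_add_le_sq_div_add_sq_div {R : Type*} [Field R] [LinearOrder R]
    [IsStrictOrderedRing R] (a b : R) {u v : R} (hu : 0 < u) (hv : 0 < v) :
    (a + b) ^ 2 / (u + v) ≤ a ^ 2 / u + b ^ 2 / v := by
  simpa [Fin.sum_univ_two] using
    sq_sum_div_le_sum_sq_div univ ![a, b] (g := ![u, v]) (by simp [Fin.forall_fin_two, hu, hv])

section BestArm

variable {ι : Type*} [Fintype ι] [DecidableEq ι] (σ : ι → ℝ) (astar : ι)

noncomputable def minRate (w : ι → ℝ) : ℝ :=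
  ⨅ a : {a : ι // a ≠ astar}, 1 / (σ astar ^ 2 / w astar + σ a.1 ^ 2 / w a.1)

noncomputable def optimalWeights (a : ι) : ℝ :=
  if a = astar then σ astar / (σ astar + √(∑ b ∈ univ.erase astar, σ b ^ 2))
  else (1 - σ astar / (σ astar + √(∑ b ∈ univ.erase astar, σ b ^ 2))) * σ a ^ 2 /
    ∑ b ∈ univ.erase astar, σ b ^ 2

theorem eq_optimalWeights {wstar : ι → ℝ}
    (hws : wstar astar = σ astar / (σ astar + √(∑ b ∈ univ.erase astar, σ b ^ 2)))
    (hw : ∀ a, a ≠ astar → wstar a =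
      (1 - wstar astar) * σ a ^ 2 / ∑ b ∈ univ.erase astar, σ b ^ 2) :
    wstar = optimalWeights σ astar := by
  funext a
  by_cases ha : a = astar
  · subst ha; simp [optimalWeights, hws]
  · simp [optimalWeights, ha, hw a ha, hws]

variable {σ astar}

theorem optimalWeights_self :
    optimalWeights σ astar astar = σ astar / (σ astar + √(∑ b ∈ univ.erase astar, σ b ^ 2)) :=
  if_pos rfl

theorem optimalWeights_of_ne (hσ : 0 < σ astar) (hS : 0 < ∑ b ∈ univ.erase astar, σ b ^ 2)
    {a : ι} (ha : a ≠ astar) :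
    optimalWeights σ astar a = σ a ^ 2 /
      (√(∑ b ∈ univ.erase astar, σ b ^ 2) * (σ astar + √(∑ b ∈ univ.erase astar, σ b ^ 2))) := by
  rw [optimalWeights, if_neg ha]
  set S := ∑ b ∈ univ.erase astar, σ b ^ 2
  have hs : 0 < √S := Real.sqrt_pos.2 hS
  field_simp
  linear_combination σ a ^ 2 * Real.mul_self_sqrt hS.le

theorem optimalWeights_pos (hσ : ∀ a, 0 < σ a) (hS : 0 < ∑ b ∈ univ.erase astar, σ b ^ 2)
    (a : ι) : 0 < optimalWeights σ astar a := by
  have := hσ astar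
  by_cases ha : a = astar
  · subst ha; rw [optimalWeights_self]; positivity
  · rw [optimalWeights_of_ne this hS ha]
    have := hσ a
    positivity

theorem sum_optimalWeights (hσ : 0 < σ astar) (hS : 0 < ∑ b ∈ univ.erase astar, σ b ^ 2) :
    ∑ a, optimalWeights σ astar a = 1 := by
  set S := ∑ b ∈ univ.erase astar, σ b ^ 2 with hSdef
  have hs : 0 < √S := Real.sqrt_pos.2 hS
  rw [← sum_erase_add _ _ (mem_univ astar), optimalWeights_self,
    sum_congr rfl fun a ha => optimalWeights_of_ne hσ hS (ne_of_mem_erase ha), ← sum_div, ← hSdef]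
  nth_rw 1 [← Real.sq_sqrt hS.le]
  field_simp
  ring

theorem cost_optimalWeights (hσ : ∀ a, 0 < σ a) (hS : 0 < ∑ b ∈ univ.erase astar, σ b ^ 2)
    {a : ι} (ha : a ≠ astar) :
    σ astar ^ 2 / optimalWeights σ astar astar + σ a ^ 2 / optimalWeights σ astar a =
      (σ astar + √(∑ b ∈ univ.erase astar, σ b ^ 2)) ^ 2 := by
  have := hσ astar
  have := (hσ a).ne'
  have hs : 0 < √(∑ b ∈ univ.erase astar, σ b ^ 2) := Real.sqrt_pos.2 hS
  rw [optimalWeights_self, optimalWeights_of_ne (hσ astar) hS ha]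
  field_simp

theorem minRate_optimalWeights [Nontrivial ι] (hσ : ∀ a, 0 < σ a)
    (hS : 0 < ∑ b ∈ univ.erase astar, σ b ^ 2) :
    minRate σ astar (optimalWeights σ astar) =
      1 / (σ astar + √(∑ b ∈ univ.erase astar, σ b ^ 2)) ^ 2 := by
  obtain ⟨a, ha⟩ := exists_ne astar
  have : Nonempty {a : ι // a ≠ astar} := ⟨⟨a, ha⟩⟩
  rw [minRate, iInf_congr fun a => by rw [cost_optimalWeights hσ hS a.2], ciInf_const]

theorem exists_sq_add_sqrt_le_cost [Nontrivial ι] {w : ι → ℝ} (hw : ∀ a, 0 < w a)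
    (hsum : ∑ a, w a = 1) : ∃ a ≠ astar, (σ astar + √(∑ b ∈ univ.erase astar, σ b ^ 2)) ^ 2 ≤
      σ astar ^ 2 / w astar + σ a ^ 2 / w a := by
  set S := ∑ b ∈ univ.erase astar, σ b ^ 2
  obtain ⟨a, ha, hle⟩ := exists_sum_div_sum_le_div (univ_nontrivial.erase_nonempty (a := astar))
    (fun b => σ b ^ 2) fun b _ => hw b
  have hT : ∑ b ∈ univ.erase astar, w b = 1 - w astar := by
    rw [← hsum, ← sum_erase_add _ _ (mem_univ astar), add_sub_cancel_right]
  refine ⟨a, ne_of_mem_erase ha, ?_⟩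
  calc (σ astar + √S) ^ 2 = (σ astar + √S) ^ 2 / (w astar + (1 - w astar)) := by simp
    _ ≤ σ astar ^ 2 / w astar + √S ^ 2 / (1 - w astar) :=
        add_sq_div_add_le_sq_div_add_sq_div _ _ (hw astar) (hT ▸ sum_pos (fun b _ => hw b)
          (univ_nontrivial.erase_nonempty))
    _ ≤ σ astar ^ 2 / w astar + σ a ^ 2 / w a := by
        rw [Real.sq_sqrt (sum_nonneg fun b _ => sq_nonneg (σ b)), ← hT]
        gcongr

theorem minRate_le [Nontrivial ι] (hσ : 0 < σ astar) {w : ι → ℝ} (hw : ∀ a, 0 < w a)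
    (hsum : ∑ a, w a = 1) :
    minRate σ astar w ≤ 1 / (σ astar + √(∑ b ∈ univ.erase astar, σ b ^ 2)) ^ 2 := by
  obtain ⟨a, ha, hle⟩ := exists_sq_add_sqrt_le_cost (σ := σ) hw hsum
  have hbdd : BddBelow (Set.range fun b : {b : ι // b ≠ astar} =>
      1 / (σ astar ^ 2 / w astar + σ b.1 ^ 2 / w b.1)) := by
    refine ⟨0, Set.forall_mem_range.2 fun b => ?_⟩
    have := hw astar
    have := hw b.1
    positivity
  exact ciInf_le_of_le hbdd ⟨a, ha⟩ (one_div_le_one_div_of_le (by positivity) hle)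

end BestArm

theorem stmt1 (K : ℕ) (hK : 2 ≤ K) (σ : Fin K → ℝ) (hσ : ∀ a, 0 < σ a)
    (astar : Fin K) (wstar : Fin K → ℝ)
    (hws : wstar astar =
      σ astar / (σ astar + Real.sqrt (∑ b ∈ Finset.univ.erase astar, (σ b) ^ 2)))
    (hw : ∀ a, a ≠ astar → wstar a =
      (1 - wstar astar) * (σ a) ^ 2 / ∑ b ∈ Finset.univ.erase astar, (σ b) ^ 2) :
    (∀ a, 0 < wstar a) ∧ (∑ a, wstar a = 1) ∧
    (∀ w : Fin K → ℝ, (∀ a, 0 < w a) → (∑ a, w a = 1) →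
      (⨅ a : {a : Fin K // a ≠ astar}, 1 / ((σ astar) ^ 2 / w astar + (σ a.1) ^ 2 / w a.1)) ≤
      (⨅ a : {a : Fin K // a ≠ astar},
        1 / ((σ astar) ^ 2 / wstar astar + (σ a.1) ^ 2 / wstar a.1))) ∧
    (⨅ a : {a : Fin K // a ≠ astar},
        1 / ((σ astar) ^ 2 / wstar astar + (σ a.1) ^ 2 / wstar a.1)) =
      1 / (σ astar + Real.sqrt (∑ b ∈ Finset.univ.erase astar, (σ b) ^ 2)) ^ 2 := by
  have : Nontrivial (Fin K) := Fin.nontrivial_iff_two_le.2 hK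
  have hS : 0 < ∑ b ∈ univ.erase astar, σ b ^ 2 :=
    sum_pos (fun b _ => pow_pos (hσ b) 2) univ_nontrivial.erase_nonempty
  obtain rfl := eq_optimalWeights σ astar hws hw
  have hvalue := minRate_optimalWeights hσ hS
  exact ⟨optimalWeights_pos hσ hS, sum_optimalWeights (hσ astar) hS,
    fun w hwpos hsum => (minRate_le (hσ astar) hwpos hsum).trans_eq hvalue.symm, hvalue⟩
end

section
/- Let u ≥ λ̄ ≥ 0. Then ∫_{λ̄}^∞ exp(−t²/2) dt / ∫_u^∞ exp(−t²/2) dt ≤ √2 · ((1+u)/(1+λ̄)) · exp((u² − λ̄²)/2). -/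
/-!
With `w t = (t² + t + 1) / (1 + t)²` (`millsWeight`), the function `-exp (-t²/2) / (1 + t)` has
derivative `w t · exp (-t²/2)`, so `∫_x^∞ w t · exp (-t²/2) dt = exp (-x²/2) / (1 + x)` for
`x > -1`.
Since `3/4 ≤ w ≤ 1` on `[0, ∞)`, the Gaussian tail `∫_x^∞ exp (-t²/2) dt` lies between
`exp (-x²/2) / (1 + x)` and `4/3` times it; dividing the upper bound at `λ̄` by the lower bound
at `u` gives the claim, as `4/3 ≤ √2`.
-/

open MeasureTheory Filter Set Real

lemma integrable_exp_neg_sq_div_two : Integrable fun t : ℝ => exp (-t ^ 2 / 2) := by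
  convert integrable_exp_neg_mul_sq (one_half_pos (α := ℝ)) using 2 with t
  congr 1; ring

noncomputable def millsWeight (t : ℝ) : ℝ := (t ^ 2 + t + 1) / (1 + t) ^ 2

lemma millsWeight_nonneg {t : ℝ} : 0 ≤ millsWeight t := by
  have : 0 < t ^ 2 + t + 1 := by nlinarith [sq_nonneg (t + 1 / 2)]
  unfold millsWeight
  positivity

lemma millsWeight_le_one {t : ℝ} (ht : 0 ≤ t) : millsWeight t ≤ 1 := by
  rw [millsWeight, div_le_one (by positivity)]
  nlinarith

lemma three_quarters_le_millsWeight {t : ℝ} (ht : t ≠ -1) : 3 / 4 ≤ millsWeight t := by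
  have : 0 < (1 + t) ^ 2 := by
    have : 1 + t ≠ 0 := fun h => ht (by linarith)
    positivity
  rw [millsWeight, le_div_iff₀ this]
  nlinarith [sq_nonneg (t - 1)]

lemma hasDerivAt_neg_exp_div_one_add {t : ℝ} (ht : t ≠ -1) :
    HasDerivAt (fun t => -exp (-t ^ 2 / 2) / (1 + t)) (millsWeight t * exp (-t ^ 2 / 2)) t := by
  have h1t : 1 + t ≠ 0 := fun h => ht (by linarith)
  have hnum : HasDerivAt (fun t => -exp (-t ^ 2 / 2)) (t * exp (-t ^ 2 / 2)) t := by
    refine (((hasDerivAt_pow 2 t).neg.div_const 2).exp).neg.congr_deriv ?_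
    simp only [Pi.neg_apply, Nat.cast_ofNat]
    ring
  refine (hnum.div ((hasDerivAt_id t).const_add 1) h1t).congr_deriv ?_
  simp only [millsWeight, id]
  field_simp
  ring

lemma tendsto_neg_exp_div_one_add_atTop :
    Tendsto (fun t : ℝ => -exp (-t ^ 2 / 2) / (1 + t)) atTop (nhds 0) := by
  have hexp : Tendsto (fun t : ℝ => exp (-t ^ 2 / 2)) atTop (nhds 0) :=
    tendsto_exp_atBot.comp <|
      (tendsto_neg_atTop_atBot.comp (tendsto_pow_atTop two_ne_zero)).atBot_div_const two_pos
  simpa using hexp.neg.div_atTop (tendsto_atTop_add_const_left _ 1 tendsto_id)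

lemma integrableOn_Ioi_millsWeight_mul_exp {x : ℝ} (hx : -1 < x) :
    IntegrableOn (fun t => millsWeight t * exp (-t ^ 2 / 2)) (Ioi x) :=
  integrableOn_Ioi_deriv_of_nonneg'
    (fun _ ht => hasDerivAt_neg_exp_div_one_add (hx.trans_le ht).ne')
    (fun _ _ => mul_nonneg millsWeight_nonneg (exp_pos _).le)
    tendsto_neg_exp_div_one_add_atTop

lemma integral_Ioi_millsWeight_mul_exp {x : ℝ} (hx : -1 < x) :
    ∫ t in Ioi x, millsWeight t * exp (-t ^ 2 / 2) = exp (-x ^ 2 / 2) / (1 + x) := by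
  rw [integral_Ioi_of_hasDerivAt_of_nonneg'
    (fun _ ht => hasDerivAt_neg_exp_div_one_add (hx.trans_le ht).ne')
    (fun _ _ => mul_nonneg millsWeight_nonneg (exp_pos _).le) tendsto_neg_exp_div_one_add_atTop]
  ring

lemma exp_div_one_add_le_integral_Ioi {x : ℝ} (hx : 0 ≤ x) :
    exp (-x ^ 2 / 2) / (1 + x) ≤ ∫ t in Ioi x, exp (-t ^ 2 / 2) := by
  have hx' : -1 < x := by linarith
  rw [← integral_Ioi_millsWeight_mul_exp hx']
  refine setIntegral_mono_on (integrableOn_Ioi_millsWeight_mul_exp hx')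
    integrable_exp_neg_sq_div_two.integrableOn measurableSet_Ioi fun t ht => ?_
  exact mul_le_of_le_one_left (exp_pos _).le (millsWeight_le_one (hx.trans (le_of_lt ht)))

lemma integral_Ioi_le_four_thirds_mul_exp_div_one_add {x : ℝ} (hx : -1 < x) :
    ∫ t in Ioi x, exp (-t ^ 2 / 2) ≤ 4 / 3 * (exp (-x ^ 2 / 2) / (1 + x)) := by
  rw [← integral_Ioi_millsWeight_mul_exp hx, ← integral_const_mul]
  refine setIntegral_mono_on integrable_exp_neg_sq_div_two.integrableOn
    ((integrableOn_Ioi_millsWeight_mul_exp hx).const_mul _)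
    measurableSet_Ioi fun t ht => ?_
  have hw : 1 ≤ 4 / 3 * millsWeight t := by
    linarith [three_quarters_le_millsWeight (t := t) (by linarith [mem_Ioi.1 ht])]
  calc exp (-t ^ 2 / 2) ≤ 4 / 3 * millsWeight t * exp (-t ^ 2 / 2) :=
        le_mul_of_one_le_left (exp_pos _).le hw
    _ = 4 / 3 * (millsWeight t * exp (-t ^ 2 / 2)) := mul_assoc _ _ _

theorem stmt13 (u lam : ℝ) (h0 : 0 ≤ lam) (hle : lam ≤ u) :
    (∫ t in Set.Ioi lam, Real.exp (-t ^ 2 / 2)) /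
        (∫ t in Set.Ioi u, Real.exp (-t ^ 2 / 2)) ≤
      Real.sqrt 2 * ((1 + u) / (1 + lam)) * Real.exp ((u ^ 2 - lam ^ 2) / 2) := by
  have hden := exp_div_one_add_le_integral_Ioi (h0.trans hle)
  have hnum := integral_Ioi_le_four_thirds_mul_exp_div_one_add (by linarith : -1 < lam)
  have hsqrt : (4 / 3 : ℝ) ≤ √2 := Real.le_sqrt_of_sq_le (by norm_num)
  have h1l : 0 < 1 + lam := by linarith
  have h1u : 0 < 1 + u := by linarith
  calc (∫ t in Ioi lam, exp (-t ^ 2 / 2)) / ∫ t in Ioi u, exp (-t ^ 2 / 2)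
      ≤ 4 / 3 * (exp (-lam ^ 2 / 2) / (1 + lam)) / (exp (-u ^ 2 / 2) / (1 + u)) :=
        div_le_div₀ (by positivity) hnum (by positivity) hden
    _ = 4 / 3 * ((1 + u) / (1 + lam)) * exp ((u ^ 2 - lam ^ 2) / 2) := by
        rw [show (u ^ 2 - lam ^ 2) / 2 = -lam ^ 2 / 2 - -u ^ 2 / 2 by ring, exp_sub]
        field_simp
    _ ≤ √2 * ((1 + u) / (1 + lam)) * exp ((u ^ 2 - lam ^ 2) / 2) := by gcongr
end

section
/- Let σ*, σ_a > 0 for a in a finite index set S (suboptimal arms), w* a probability vector with w*(a*) = σ*/(σ* + √(∑_{a∈S} σ_a²)) and w*(a) = (1 − w*(a*))σ_a²/∑_{b∈S}σ_b² for a ∈ S. Then for each a ∈ S, σ*²/w*(a*) + σ_a²/w*(a) = (σ* + √(∑_{b∈S} σ_b²))², i.e., the objective value is equal across all suboptimal arms at the optimizer. -/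
theorem sq_div_weight_add_div_weight_eq_sq {x s T c : ℝ} (hx : 0 < x) (hs : 0 < s)
    (hsT : s ^ 2 = T) (hc : c ≠ 0) :
    x ^ 2 / (x / (x + s)) + c / ((1 - x / (x + s)) * c / T) = (x + s) ^ 2 := by
  have hxs : x + s ≠ 0 := by positivity
  have h_one_sub : 1 - x / (x + s) = s / (x + s) := by
    rw [one_sub_div hxs, add_sub_cancel_left]
  have h_opt : x ^ 2 / (x / (x + s)) = x * (x + s) := by
    field_simp
  have h_sub : c / (s / (x + s) * c / T) = s * (x + s) := by
    subst hsT
    field_simp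
  rw [h_one_sub, h_opt, h_sub]
  ring

theorem stmt19_general {S : Type*} [Fintype S]
    (σstar : ℝ) (σ : S → ℝ) (hstar : 0 < σstar) (hσ : ∀ a, 0 < σ a)
    (wstar_star : ℝ) (w : S → ℝ)
    (hws : wstar_star = σstar / (σstar + Real.sqrt (∑ b, (σ b) ^ 2)))
    (hw : ∀ a, w a = (1 - wstar_star) * (σ a) ^ 2 / ∑ b, (σ b) ^ 2) :
    ∀ a, σstar ^ 2 / wstar_star + (σ a) ^ 2 / w a =
      (σstar + Real.sqrt (∑ b, (σ b) ^ 2)) ^ 2 := by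
  intro a
  have hT : 0 < ∑ b, σ b ^ 2 :=
    (pow_pos (hσ a) 2).trans_le
      (Finset.single_le_sum (fun b _ => sq_nonneg (σ b)) (Finset.mem_univ a))
  rw [hw a, hws]
  exact sq_div_weight_add_div_weight_eq_sq hstar (Real.sqrt_pos.2 hT) (Real.sq_sqrt hT.le)
    (pow_pos (hσ a) 2).ne'

theorem stmt19 {S : Type*} [Fintype S] [Nonempty S]
    (σstar : ℝ) (σ : S → ℝ) (hstar : 0 < σstar) (hσ : ∀ a, 0 < σ a)
    (wstar_star : ℝ) (w : S → ℝ)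
    (hws : wstar_star = σstar / (σstar + Real.sqrt (∑ b, (σ b) ^ 2)))
    (hw : ∀ a, w a = (1 - wstar_star) * (σ a) ^ 2 / ∑ b, (σ b) ^ 2) :
    ∀ a, σstar ^ 2 / wstar_star + (σ a) ^ 2 / w a =
      (σstar + Real.sqrt (∑ b, (σ b) ^ 2)) ^ 2 :=
  stmt19_general σstar σ hstar hσ wstar_star w hws hw
end
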